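/- arXiv:1910.08872 — 5 statements merged into one kernel-verified Lean document; each statement's English description precedes it below -/
import Mathlib

section
/- Let w be a permutation of the positive integers with only finitely many non-fixed points, and let (i,j) and (i',j') be elements of the Rothe diagram RD(w) with i < i' and j < j'. Then (i' + j' − #{a < i' : w(a) < j'}) − (i + j − #{a < i : w(a) < j}) ≥ 2. -/
/-- The simple transposition corresponding to the cell `(i, j)`, namely
`s_{i+j-1}`, swapping `i+j-1` and `i+j` (as a permutation of the positive integers). -/
def cellTrans (p : ℕ+ × ℕ+) : Equiv.Perm ℕ+ :=
  Equiv.swap (p.1 + p.2 - 1) (p.1 + p.2)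

/-- Key used to order cells: rows increasing, and within a row, columns decreasing. -/
def cellKey (p : ℕ+ × ℕ+) : Lex (ℕ+ × ℕ+ᵒᵈ) :=
  toLex (p.1, OrderDual.toDual p.2)

/-- The product of the simple transpositions `s_{i+j-1}` over the cells `(i,j)` of `D`,
taken with `i` increasing and, for fixed `i`, `j` decreasing. -/
def pdWord (D : Finset (ℕ+ × ℕ+)) : Equiv.Perm ℕ+ :=
  (((D.image cellKey).sort (· ≤ ·)).map
    (fun q => cellTrans ((ofLex q).1, OrderDual.ofDual (ofLex q).2))).prod

/-- The number of inversions of a permutation of the positive integers. -/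
noncomputable def invNum (w : Equiv.Perm ℕ+) : ℕ :=
  Set.ncard {p : ℕ+ × ℕ+ | p.1 < p.2 ∧ w p.2 < w p.1}

/-- `D` is a pipe dream (RC-graph) of `w`. -/
def IsPipeDream (w : Equiv.Perm ℕ+) (D : Finset (ℕ+ × ℕ+)) : Prop :=
  D.card = invNum w ∧ pdWord D = w

/-- The number of pipe dreams of `w`. -/
noncomputable def nu (w : Equiv.Perm ℕ+) : ℕ :=
  Set.ncard {D : Finset (ℕ+ × ℕ+) | IsPipeDream w D}

/-- The number of occurrences of the pattern 132 in `w`. -/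
noncomputable def p132 (w : Equiv.Perm ℕ+) : ℕ :=
  Set.ncard {t : ℕ+ × ℕ+ × ℕ+ |
    t.1 < t.2.1 ∧ t.2.1 < t.2.2 ∧ w t.1 < w t.2.2 ∧ w t.2.2 < w t.2.1}

/-- The number of occurrences of the pattern 1432 in `w`. -/
noncomputable def p1432 (w : Equiv.Perm ℕ+) : ℕ :=
  Set.ncard {t : ℕ+ × ℕ+ × ℕ+ × ℕ+ |
    t.1 < t.2.1 ∧ t.2.1 < t.2.2.1 ∧ t.2.2.1 < t.2.2.2 ∧
    w t.1 < w t.2.2.2 ∧ w t.2.2.2 < w t.2.2.1 ∧ w t.2.2.1 < w t.2.1}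

/-- `w` avoids the pattern 1432. -/
def Avoids1432 (w : Equiv.Perm ℕ+) : Prop :=
  ¬ ∃ a b c d : ℕ+, a < b ∧ b < c ∧ c < d ∧ w a < w d ∧ w d < w c ∧ w c < w b

/-- The Rothe diagram of `w`. -/
def RD (w : Equiv.Perm ℕ+) : Set (ℕ+ × ℕ+) :=
  {p | p.2 < w p.1 ∧ p.1 < w⁻¹ p.2}

/-- The Lehmer code of `w`: `code(w)_i = #{j > i : w(j) < w(i)}`. -/
noncomputable def lehmer (w : Equiv.Perm ℕ+) (i : ℕ+) : ℕ :=
  Set.ncard {j : ℕ+ | i < j ∧ w j < w i}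

/-- The bottom pipe dream `B_w = {(i,j) : 1 ≤ j ≤ code(w)_i}` (as a set of cells). -/
def bottomSet (w : Equiv.Perm ℕ+) : Set (ℕ+ × ℕ+) :=
  {p | (p.2 : ℕ) ≤ lehmer w p.1}

/-- The top pipe dream `T_w = {(i,j) : 1 ≤ i ≤ code(w⁻¹)_j}` (as a set of cells). -/
def topSet (w : Equiv.Perm ℕ+) : Set (ℕ+ × ℕ+) :=
  {p | (p.1 : ℕ) ≤ lehmer w⁻¹ p.2}

/-- `α(S)_m`: the number of cells of `S` on the diagonal `{(i,j) : i + j - 1 = m}`. -/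
noncomputable def diagCount (S : Set (ℕ+ × ℕ+)) : ℕ+ → ℕ :=
  fun m => Set.ncard {p | p ∈ S ∧ p.1 + p.2 = m + 1}

/-- Ladder move of order `k` taking `D` to `D'`: writing `i = i₀ + k + 1` (so `i₀ = i - k - 1`
and automatically `i ≥ k + 2`), it requires `(i,j) ∈ D`, `(i,j+1) ∉ D`, `(i₀,j) ∉ D`,
`(i₀,j+1) ∉ D`, and `(i',j), (i',j+1) ∈ D` for all `i - k ≤ i' < i`; it removes `(i,j)` and
adds `(i₀, j+1)`. -/
def LadderMove (k : ℕ) (D D' : Finset (ℕ+ × ℕ+)) : Prop :=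
  ∃ i₀ j : ℕ+,
    (i₀ + k.succPNat, j) ∈ D ∧
    (i₀ + k.succPNat, j + 1) ∉ D ∧
    (i₀, j) ∉ D ∧
    (i₀, j + 1) ∉ D ∧
    (∀ i' : ℕ+, i₀ < i' → i' < i₀ + k.succPNat → (i', j) ∈ D ∧ (i', j + 1) ∈ D) ∧
    D' = insert (i₀, j + 1) (D.erase (i₀ + k.succPNat, j))

/-!
Write `N(i, j) = #{a < i : w(a) < j}`. If `a` is counted by `N(i', j')` but not by `N(i, j)` and
`a ≤ i`, then `j ≤ w(a)` (for `a = i` because `w(i) > j`), and `w(a) ≠ j` because `w⁻¹(j) > i`.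
So every such `a` lies either strictly between `i` and `i'` or in the preimage of the open interval
`(j, j')`, whence `N(i', j') - N(i, j) ≤ (i' - i - 1) + (j' - j - 1)`.
-/

open Set

section LinearOrder

variable {α : Type*} [LinearOrder α]

def lowerLeft (w : Equiv.Perm α) (i j : α) : Set α :=
  {a | a < i ∧ w a < j}

theorem lowerLeft_diff_subset {w : Equiv.Perm α} {i j i' j' : α}
    (hwi : j < w i) (hwj : i < w⁻¹ j) :
    lowerLeft w i' j' \ lowerLeft w i j ⊆ Ioo i i' ∪ w ⁻¹' Ioo j j' := by
  rintro a ⟨⟨hai', hwaj'⟩, hnot⟩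
  rcases lt_or_ge i a with hia | hai
  · exact Or.inl ⟨hia, hai'⟩
  · have hne : w a ≠ j := by
      rintro rfl
      exact hai.not_gt (by simpa using hwj)
    have hle : j ≤ w a := by
      rcases hai.lt_or_eq with hai | rfl
      · exact not_lt.mp fun h => hnot ⟨hai, h⟩
      · exact hwi.le
    exact Or.inr ⟨hle.lt_of_ne hne.symm, hwaj'⟩

end LinearOrder

theorem PNat.ncard_Ioo (a b : ℕ+) : (Ioo a b).ncard = (b : ℕ) - a - 1 := by
  rw [← Finset.coe_Ioo, ncard_coe_finset, PNat.card_Ioo]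

theorem ncard_lowerLeft_diff_le {w : Equiv.Perm ℕ+} {i j : ℕ+} (i' j' : ℕ+)
    (hwi : j < w i) (hwj : i < w⁻¹ j) :
    (lowerLeft w i' j' \ lowerLeft w i j).ncard ≤ ((i' : ℕ) - i - 1) + ((j' : ℕ) - j - 1) :=
  calc (lowerLeft w i' j' \ lowerLeft w i j).ncard
      ≤ (Ioo i i' ∪ w ⁻¹' Ioo j j').ncard :=
        ncard_le_ncard (lowerLeft_diff_subset hwi hwj) ((finite_Ioo _ _).union
          ((finite_Ioo _ _).preimage w.injective.injOn))
    _ ≤ (Ioo i i').ncard + (w ⁻¹' Ioo j j').ncard := ncard_union_le _ _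
    _ = ((i' : ℕ) - i - 1) + ((j' : ℕ) - j - 1) := by
        rw [ncard_preimage_of_injective_subset_range w.injective (by simp), PNat.ncard_Ioo,
          PNat.ncard_Ioo]

theorem diag_diff_ge_two_general (w : Equiv.Perm ℕ+)
    (i j i' j' : ℕ+) (hij : (i, j) ∈ RD w)
    (hi : i < i') (hj : j < j') :
    ((((i' : ℕ) : ℤ) + ((j' : ℕ) : ℤ) - (Set.ncard {a : ℕ+ | a < i' ∧ w a < j'} : ℤ)) -
      (((i : ℕ) : ℤ) + ((j : ℕ) : ℤ) - (Set.ncard {a : ℕ+ | a < i ∧ w a < j} : ℤ))) ≥ 2 := by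
  obtain ⟨hwi, hwj⟩ : j < w i ∧ i < w⁻¹ j := hij
  have hsplit : (lowerLeft w i' j').ncard ≤
      (lowerLeft w i' j' \ lowerLeft w i j).ncard + (lowerLeft w i j).ncard :=
    ncard_le_ncard_sdiff_add_ncard _ _ ((finite_Iio i).subset fun _ ha => ha.1)
  have hdiff := ncard_lowerLeft_diff_le i' j' hwi hwj
  have hi' : (i : ℕ) < i' := hi
  have hj' : (j : ℕ) < j' := hj
  unfold lowerLeft at hsplit hdiff
  omega

/-- diagonal numbers after left-justification differ by at least 2. -/
theorem diag_diff_ge_two (w : Equiv.Perm ℕ+)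
    (hw : {x : ℕ+ | w x ≠ x}.Finite)
    (i j i' j' : ℕ+) (hij : (i, j) ∈ RD w) (hij' : (i', j') ∈ RD w)
    (hi : i < i') (hj : j < j') :
    ((((i' : ℕ) : ℤ) + ((j' : ℕ) : ℤ) - (Set.ncard {a : ℕ+ | a < i' ∧ w a < j'} : ℤ)) -
      (((i : ℕ) : ℤ) + ((j : ℕ) : ℤ) - (Set.ncard {a : ℕ+ | a < i ∧ w a < j} : ℤ))) ≥ 2 :=
  diag_diff_ge_two_general w i j i' j' hij hi hj
end

section
/- For every permutation w of the positive integers with only finitely many non-fixed points, p_1432(w) = Σ_{(i,j) ∈ RD(w)} #{a < i : w(a) < j} · #{c : i < c < w^{-1}(j) and j < w(c) < w(i)}. -/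
/-!
An occurrence `a < b < c < d` of 1432 is the same thing as a cell `(b, w d)` of the Rothe diagram
(it lies there since `b < c < d` and `w d < w c < w b`) together with an `a` from the first and a
`c` from the second set of the summand, and these two choices are independent. The sum is finite
because `w` fixes all large points, which confines `RD w` to a square.
-/

def rotheLeft (w : Equiv.Perm ℕ+) (p : ℕ+ × ℕ+) : Set ℕ+ :=
  {a | a < p.1 ∧ w a < p.2}

def rotheInner (w : Equiv.Perm ℕ+) (p : ℕ+ × ℕ+) : Set ℕ+ :=
  {c | p.1 < c ∧ c < w⁻¹ p.2 ∧ p.2 < w c ∧ w c < w p.1}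

theorem rotheLeft_finite (w : Equiv.Perm ℕ+) (p : ℕ+ × ℕ+) : (rotheLeft w p).Finite :=
  (Set.finite_Iio p.1).subset fun _ ha => ha.1

theorem rotheInner_finite (w : Equiv.Perm ℕ+) (p : ℕ+ × ℕ+) : (rotheInner w p).Finite :=
  (Set.finite_Iio (w⁻¹ p.2)).subset fun _ hc => hc.2.1

namespace Equiv.Perm

variable {α : Type*} [LinearOrder α] {w : Equiv.Perm α} {N : α}

theorem inv_apply_eq_self_of_lt (hN : ∀ x, N < x → w x = x) {x : α} (hx : N < x) :
    w⁻¹ x = x := by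
  rw [inv_eq_iff_eq, hN x hx]

theorem lt_apply_iff_of_fixed_gt (hN : ∀ x, N < x → w x = x) {x : α} : N < w x ↔ N < x := by
  refine ⟨fun h => ?_, fun h => by rwa [hN x h]⟩
  rwa [← w.injective (hN _ h)]

end Equiv.Perm

open Equiv.Perm in
theorem RD_subset_Iic_prod_Iic {w : Equiv.Perm ℕ+} {N : ℕ+} (hN : ∀ x, N < x → w x = x) :
    RD w ⊆ Set.Iic N ×ˢ Set.Iic N := by
  rintro ⟨i, j⟩ ⟨hj, hi⟩
  by_contra hout
  have hlarge : N < i ∨ N < j := by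
    simpa only [Set.mem_prod, Set.mem_Iic, not_and_or, not_le] using hout
  have hNi : N < i := hlarge.elim id fun h => (lt_apply_iff_of_fixed_gt hN).1 (h.trans hj)
  have hNj : N < j := hlarge.elim
    (fun h => (lt_apply_iff_of_fixed_gt fun _ => inv_apply_eq_self_of_lt hN).1 (h.trans hi)) id
  rw [hN i hNi] at hj
  rw [inv_apply_eq_self_of_lt hN hNj] at hi
  exact lt_asymm hi hj

theorem RD_finite {w : Equiv.Perm ℕ+} (hw : {x : ℕ+ | w x ≠ x}.Finite) : (RD w).Finite := by
  obtain ⟨N, hN⟩ := hw.bddAbove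
  refine ((Set.finite_Iic N).prod (Set.finite_Iic N)).subset (RD_subset_Iic_prod_Iic ?_)
  exact fun x hx => not_not.1 fun h => hx.not_ge (hN h)

def occurrenceEquiv (w : Equiv.Perm ℕ+) : ℕ+ × ℕ+ × ℕ+ × ℕ+ ≃ (ℕ+ × ℕ+) × ℕ+ × ℕ+ where
  toFun t := ((t.2.1, w t.2.2.2), t.1, t.2.2.1)
  invFun q := (q.2.1, q.1.1, q.2.2, w⁻¹ q.1.2)
  left_inv t := by simp
  right_inv q := by simp

theorem image_occurrenceEquiv (w : Equiv.Perm ℕ+) :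
    occurrenceEquiv w '' {t : ℕ+ × ℕ+ × ℕ+ × ℕ+ |
      t.1 < t.2.1 ∧ t.2.1 < t.2.2.1 ∧ t.2.2.1 < t.2.2.2 ∧
      w t.1 < w t.2.2.2 ∧ w t.2.2.2 < w t.2.2.1 ∧ w t.2.2.1 < w t.2.1} =
      ⋃ p ∈ RD w, {p} ×ˢ (rotheLeft w p ×ˢ rotheInner w p) := by
  rw [Equiv.image_eq_preimage_symm]
  ext ⟨⟨i, j⟩, a, c⟩
  simp only [occurrenceEquiv, Equiv.coe_fn_symm_mk, Set.mem_preimage, Set.mem_ofPred_eq,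
    Equiv.Perm.coe_inv, Equiv.apply_symm_apply, Set.mem_iUnion, Set.mem_prod,
    Set.mem_singleton_iff, exists_prop, Prod.exists, Prod.mk.injEq, rotheLeft, rotheInner, RD]
  constructor
  · rintro ⟨hai, hic, hcd, hwa, hjc, hci⟩
    exact ⟨i, j, ⟨hjc.trans hci, hic.trans hcd⟩, ⟨rfl, rfl⟩, ⟨hai, hwa⟩, hic, hcd, hjc, hci⟩
  · rintro ⟨_, _, -, ⟨rfl, rfl⟩, ⟨hai, hwa⟩, hic, hcd, hjc, hci⟩
    exact ⟨hai, hic, hcd, hwa, hjc, hci⟩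

theorem p1432_eq_ncard_biUnion (w : Equiv.Perm ℕ+) :
    p1432 w = (⋃ p ∈ RD w, {p} ×ˢ (rotheLeft w p ×ˢ rotheInner w p)).ncard := by
  rw [p1432, ← Set.ncard_image_of_injective _ (occurrenceEquiv w).injective,
    image_occurrenceEquiv]

/-- `p_1432(w) = Σ_{(i,j) ∈ RD(w)} #A_{(i,j)} · #C_{(i,j)}`. -/
theorem p1432_eq_sum_over_rothe (w : Equiv.Perm ℕ+)
    (hw : {x : ℕ+ | w x ≠ x}.Finite) :
    p1432 w = ∑ᶠ p ∈ RD w,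
      Set.ncard {a : ℕ+ | a < p.1 ∧ w a < p.2} *
        Set.ncard {c : ℕ+ | p.1 < c ∧ c < w⁻¹ p.2 ∧ p.2 < w c ∧ w c < w p.1} := by
  have hfinite : ∀ p ∈ RD w, ({p} ×ˢ (rotheLeft w p ×ˢ rotheInner w p)).Finite :=
    fun p _ => (Set.finite_singleton p).prod ((rotheLeft_finite w p).prod (rotheInner_finite w p))
  have hdisjoint : (RD w).PairwiseDisjoint fun p => {p} ×ˢ (rotheLeft w p ×ˢ rotheInner w p) :=
    fun p _ q _ hpq => Set.disjoint_prod.2 (Or.inl (Set.disjoint_singleton.2 hpq))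
  rw [p1432_eq_ncard_biUnion, (RD_finite hw).ncard_biUnion hfinite hdisjoint]
  refine finsum_mem_congr rfl fun p _ => ?_
  rw [Set.ncard_prod, Set.ncard_singleton, one_mul, Set.ncard_prod, rotheLeft, rotheInner]
end

section
/- If a permutation w of the positive integers with only finitely many non-fixed points avoids the pattern 1432 (there are no a<b<c<d with w(a)<w(d)<w(c)<w(b)), then for every pipe dream D of w and every k ≥ 1, no ladder move of order k is applicable to D. -/
/-
Taken in reading order, the cells of `D` form a word for `w` of length `invNum w`, hence a reduced
word. So the cells of `D` are in bijection with the inversions of `w`: the cell `(i, j)` swaps the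
two pipes that the later cells bring to the positions `i + j - 1` and `i + j`.

Take a ladder move of order `k ≥ 1` with lowest cell `(b + 1, j)` and top row `i₀`. The pipes
`X < Y` crossing at `(b + 1, j)` form an inversion. Then `Y` climbs column `j` of the ladder, while
`X` crosses a pipe `Z` at `(b, j + 1)`, and `Z ≥ b` because the cells after `(b, j + 1)` fix every
position `< b`. So `Z < X < Y` and `w Y < w X < w Z`. The pipes `a ≤ i₀` are not moved below row
`i₀`, `Y` is not moved in row `i₀` (the gap at columns `j, j + 1`), and in each row `Y` is swapped
down past at most one pipe. Hence at most `i₀ - 1` of the `i₀` pipes `a ≤ i₀` are inverted with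
`Y`, and for any other one `a Z X Y` is an occurrence of 1432.
-/

open Equiv Finset

def inversions (σ : Perm ℕ+) : Set (ℕ+ × ℕ+) :=
  {p | p.1 < p.2 ∧ σ p.2 < σ p.1}

def swapWord (l : List ℕ+) : Perm ℕ+ :=
  (l.map fun m => swap m (m + 1)).prod

def crossing (σ : Perm ℕ+) (m : ℕ+) : ℕ+ × ℕ+ :=
  (σ⁻¹ m, σ⁻¹ (m + 1))

def crossings : List ℕ+ → List (ℕ+ × ℕ+)
  | [] => []
  | m :: l => crossing (swapWord l) m :: crossings l

lemma length_crossings (l : List ℕ+) : (crossings l).length = l.length := by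
  induction l with
  | nil => rfl
  | cons m l ih => simp [crossings, ih]

lemma crossing_eq_iff {σ : Perm ℕ+} {m x y : ℕ+} :
    crossing σ m = (x, y) ↔ σ x = m ∧ σ y = m + 1 := by
  rw [crossing, Prod.mk.injEq, Perm.inv_eq_iff_eq, Perm.inv_eq_iff_eq, eq_comm, @eq_comm _ (m + 1)]

lemma swap_succ_lt_swap_succ {m x y : ℕ+} (hxy : x < y) (hne : ¬(x = m ∧ y = m + 1)) :
    swap m (m + 1) x < swap m (m + 1) y := by
  simp only [swap_apply_def]
  split_ifs <;> pnat_to_nat <;> omega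

lemma inversions_swap_mul_subset (σ : Perm ℕ+) (m : ℕ+) :
    inversions (swap m (m + 1) * σ) ⊆ insert (crossing σ m) (inversions σ) := by
  rintro ⟨x, y⟩ ⟨hxy, hinv⟩
  dsimp only at hxy hinv
  by_cases hcross : σ x = m ∧ σ y = m + 1
  · exact Or.inl (crossing_eq_iff.mpr hcross).symm
  · refine Or.inr ⟨hxy, lt_of_not_ge fun hle => ?_⟩
    have hlt : σ x < σ y := lt_of_le_of_ne hle fun h => hxy.ne (σ.injective h)
    exact hinv.not_gt (swap_succ_lt_swap_succ hlt hcross)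

lemma inversions_swapWord_subset (l : List ℕ+) :
    inversions (swapWord l) ⊆ {p | p ∈ crossings l} := by
  induction l with
  | nil =>
    rintro p ⟨hlt, hinv⟩
    exact absurd hlt (by simpa [swapWord] using hinv.le)
  | cons m l ih =>
    intro p hp
    rcases inversions_swap_mul_subset (swapWord l) m (by simpa [swapWord] using hp) with rfl | hp
    · simp [crossings]
    · exact List.mem_cons_of_mem _ (ih hp)

theorem inversions_swapWord_of_invNum_eq {l : List ℕ+} (h : invNum (swapWord l) = l.length) :
    inversions (swapWord l) = {p | p ∈ crossings l} := by
  refine Set.eq_of_subset_of_ncard_le (inversions_swapWord_subset l) ?_ (crossings l).finite_toSet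
  calc {p | p ∈ crossings l}.ncard = (crossings l).toFinset.card := by
        rw [← Set.ncard_coe_finset, List.coe_toFinset]
    _ ≤ l.length := (crossings l).toFinset_card_le.trans (length_crossings l).le
    _ = (inversions (swapWord l)).ncard := h.symm

def letter (c : ℕ+ × ℕ+) : ℕ+ := c.1 + c.2 - 1

lemma letter_mk (r m : ℕ+) : letter (r, m) = r + m - 1 := rfl

lemma letter_add_one (c : ℕ+ × ℕ+) : letter c + 1 = c.1 + c.2 := by
  obtain ⟨r, m⟩ := c
  simp only [letter]
  pnat_to_nat
  omega

lemma cellTrans_eq_swap (c : ℕ+ × ℕ+) : cellTrans c = swap (letter c) (letter c + 1) := by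
  rw [letter_add_one]
  rfl

lemma cellTrans_apply_of_ne {c : ℕ+ × ℕ+} {u : ℕ+} (h : u ≠ letter c)
    (h' : u ≠ letter c + 1) : cellTrans c u = u := by
  rw [cellTrans_eq_swap, swap_apply_of_ne_of_ne h h']

lemma cellKey_injective : Function.Injective cellKey := fun a b h => by
  simpa [cellKey, Prod.ext_iff] using h

lemma cellKey_lt_cellKey {a b : ℕ+ × ℕ+} :
    cellKey a < cellKey b ↔ a.1 < b.1 ∨ a.1 = b.1 ∧ b.2 < a.2 :=
  Prod.Lex.lt_iff

lemma cellKey_le_cellKey {a b : ℕ+ × ℕ+} :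
    cellKey a ≤ cellKey b ↔ a.1 < b.1 ∨ a.1 = b.1 ∧ b.2 ≤ a.2 :=
  Prod.Lex.le_iff

section PipeDreams

variable {w : Perm ℕ+} {D : Finset (ℕ+ × ℕ+)}

def readingWord (D : Finset (ℕ+ × ℕ+)) : List ℕ+ :=
  ((D.image cellKey).sort (· ≤ ·)).map fun q =>
    letter ((ofLex q).1, OrderDual.ofDual (ofLex q).2)

lemma pdWord_eq_swapWord (D : Finset (ℕ+ × ℕ+)) : pdWord D = swapWord (readingWord D) := by
  simp only [pdWord, swapWord, readingWord, List.map_map, cellTrans_eq_swap]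
  rfl

lemma length_readingWord (D : Finset (ℕ+ × ℕ+)) : (readingWord D).length = D.card := by
  simp [readingWord, card_image_of_injective _ cellKey_injective]

lemma readingWord_insert {a : ℕ+ × ℕ+} (ha : a ∉ D)
    (hmin : ∀ c ∈ D, cellKey a ≤ cellKey c) :
    readingWord (insert a D) = letter a :: readingWord D := by
  rw [readingWord, image_insert, sort_insert _ (forall_mem_image.mpr hmin)
    (by simpa [cellKey_injective.eq_iff] using ha)]
  rfl

lemma pdWord_union {A B : Finset (ℕ+ × ℕ+)}
    (hAB : ∀ a ∈ A, ∀ b ∈ B, cellKey a < cellKey b) :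
    pdWord (A ∪ B) = pdWord A * pdWord B := by
  have hsort : ((A ∪ B).image cellKey).sort (· ≤ ·) =
      (A.image cellKey).sort (· ≤ ·) ++ (B.image cellKey).sort (· ≤ ·) := by
    refine (sortedLT_sort _).pairwise.eq_of_mem_iff ?_ fun q => by simp [image_union]
    refine List.pairwise_append.mpr ⟨(sortedLT_sort _).pairwise, (sortedLT_sort _).pairwise, ?_⟩
    simp only [mem_sort, mem_image]
    rintro _ ⟨a, ha, rfl⟩ _ ⟨b, hb, rfl⟩
    exact hAB a ha b hb
  simp [pdWord, hsort]

lemma pdWord_singleton (c : ℕ+ × ℕ+) : pdWord {c} = cellTrans c := by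
  simp only [pdWord, image_singleton, sort_singleton, List.map_singleton, List.prod_singleton]
  rfl

lemma pdWord_apply_of_forall {A : Finset (ℕ+ × ℕ+)} {u : ℕ+}
    (h : ∀ c ∈ A, cellTrans c u = u) : pdWord A u = u := by
  refine (MulAction.stabilizer (Perm ℕ+) u).list_prod_mem fun σ hσ => ?_
  simp only [List.mem_map, mem_sort, mem_image] at hσ
  obtain ⟨_, ⟨c, hc, rfl⟩, rfl⟩ := hσ
  exact h c hc

/- `after D t x` is where pipe `x` stands when it reaches the cell `t`. As `(r, 1)` is the last cell
of row `r` in reading order, `after D (r, 1)` is the product over the rows below `r`. -/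
def after (D : Finset (ℕ+ × ℕ+)) (t : ℕ+ × ℕ+) : Perm ℕ+ :=
  pdWord {c ∈ D | cellKey t < cellKey c}

lemma after_eq_mul {t t' : ℕ+ × ℕ+} (h : cellKey t ≤ cellKey t') :
    after D t =
      pdWord {c ∈ D | cellKey t < cellKey c ∧ cellKey c ≤ cellKey t'} * after D t' := by
  rw [after, after, ← pdWord_union]
  · congr 1
    ext c
    simp only [mem_filter, mem_union]
    constructor
    · rintro ⟨hc, htc⟩
      exact (le_or_gt (cellKey c) (cellKey t')).imp (⟨hc, htc, ·⟩) (⟨hc, ·⟩)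
    · rintro (⟨hc, htc, -⟩ | ⟨hc, htc⟩)
      exacts [⟨hc, htc⟩, ⟨hc, h.trans_lt htc⟩]
  · simp only [mem_filter]
    exact fun a ha b hb => ha.2.2.trans_lt hb.2

lemma after_apply_of_forall {t t' : ℕ+ × ℕ+} {x u : ℕ+}
    (h : cellKey t ≤ cellKey t')
    (hfix : ∀ c ∈ D, cellKey t < cellKey c → cellKey c ≤ cellKey t' → cellTrans c u = u)
    (hx : after D t' x = u) : after D t x = u := by
  rw [after_eq_mul h, Perm.mul_apply, hx]
  refine pdWord_apply_of_forall fun c hc => ?_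
  rw [mem_filter] at hc
  exact hfix c hc.1 hc.2.1 hc.2.2

lemma after_succ {c : ℕ+ × ℕ+} (hc : c ∈ D) :
    after D (c.1, c.2 + 1) = cellTrans c * after D c := by
  obtain ⟨a, b⟩ := c
  have hkey : cellKey (a, b + 1) ≤ cellKey (a, b) :=
    cellKey_le_cellKey.mpr (Or.inr ⟨rfl, (PNat.lt_add_right b 1).le⟩)
  rw [after_eq_mul hkey, ← pdWord_singleton]
  congr 2
  ext ⟨r, m⟩
  simp only [mem_filter, mem_singleton, cellKey_lt_cellKey, cellKey_le_cellKey, Prod.mk.injEq]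
  constructor
  · rintro ⟨-, h, h'⟩
    pnat_to_nat
    omega
  · rintro ⟨rfl, rfl⟩
    exact ⟨hc, Or.inr ⟨rfl, PNat.lt_add_right m 1⟩, Or.inr ⟨rfl, le_rfl⟩⟩

lemma after_apply_of_lt {t : ℕ+ × ℕ+} {u : ℕ+} (hu : u < t.1) :
    after D t u = u := by
  obtain ⟨a, b⟩ := t
  refine pdWord_apply_of_forall fun ⟨r, m⟩ hc => ?_
  simp only [mem_filter, cellKey_lt_cellKey] at hc hu
  apply cellTrans_apply_of_ne <;> simp only [letter_mk, ne_eq] <;> pnat_to_nat <;> omega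

lemma mem_crossings_readingWord {p : ℕ+ × ℕ+} :
    p ∈ crossings (readingWord D) ↔ ∃ c ∈ D, crossing (after D c) (letter c) = p := by
  induction D using Finset.induction_on_min_value cellKey with
  | empty => simp [readingWord, crossings]
  | insert a s ha hmin ih =>
    have hafter_a : after (insert a s) a = swapWord (readingWord s) := by
      rw [after, ← pdWord_eq_swapWord]
      congr 1
      ext c
      simp only [mem_filter, mem_insert]
      constructor
      · rintro ⟨rfl | hc, hac⟩
        exacts [absurd hac (lt_irrefl _), hc]
      · intro hc
        exact ⟨Or.inr hc, (hmin c hc).lt_of_ne fun h => ha (cellKey_injective h ▸ hc)⟩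
    have hafter : ∀ c ∈ s, after (insert a s) c = after s c := fun c hc => by
      rw [after, after, filter_insert, if_neg (hmin c hc).not_gt]
    rw [readingWord_insert ha hmin, crossings, List.mem_cons, ih, exists_mem_insert, hafter_a]
    refine or_congr eq_comm (exists_congr fun c => and_congr_right fun hc => ?_)
    rw [hafter c hc]

theorem IsPipeDream.inversions_eq (hD : IsPipeDream w D) :
    inversions w = {p | ∃ c ∈ D, crossing (after D c) (letter c) = p} := by
  have hred : invNum (swapWord (readingWord D)) = (readingWord D).length := by
    rw [← pdWord_eq_swapWord, hD.2, ← hD.1, length_readingWord]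
  rw [← hD.2, pdWord_eq_swapWord, inversions_swapWord_of_invNum_eq hred]
  ext p
  exact mem_crossings_readingWord

lemma IsPipeDream.mem_inversions (hD : IsPipeDream w D) {c : ℕ+ × ℕ+} (hc : c ∈ D)
    {x y : ℕ+} (hx : after D c x = letter c) (hy : after D c y = letter c + 1) :
    (x, y) ∈ inversions w :=
  hD.inversions_eq ▸ ⟨c, hc, crossing_eq_iff.mpr ⟨hx, hy⟩⟩

lemma IsPipeDream.exists_mem_of_mem_inversions (hD : IsPipeDream w D) {x y : ℕ+}
    (hmem : (x, y) ∈ inversions w) :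
    ∃ c ∈ D, after D c x = letter c ∧ after D c y = letter c + 1 := by
  rw [hD.inversions_eq] at hmem
  obtain ⟨c, hc, hcross⟩ := hmem
  exact ⟨c, hc, crossing_eq_iff.mp hcross⟩

lemma after_apply_ne_of_lt_snd {c c' : ℕ+ × ℕ+} {y : ℕ+} (hc : c ∈ D)
    (hrow : c'.1 = c.1) (hcol : c.2 < c'.2) (hy : after D c y = letter c + 1) :
    after D c' y ≠ letter c' + 1 := by
  obtain ⟨r, m⟩ := c
  obtain ⟨r', m'⟩ := c'
  dsimp only at hrow hcol
  subst hrow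
  have hnext : after D (r', m + 1) y = letter (r', m) := by
    rw [after_succ hc, Perm.mul_apply, hy, cellTrans_eq_swap, swap_apply_right]
  have hkey : cellKey (r', m') ≤ cellKey (r', m + 1) :=
    cellKey_le_cellKey.mpr (Or.inr ⟨rfl, by pnat_to_nat; omega⟩)
  rw [after_apply_of_forall hkey ?_ hnext]
  · simp only [letter_mk, ne_eq]
    pnat_to_nat
    omega
  · rintro ⟨r'', m''⟩ - h h'
    simp only [cellKey_lt_cellKey, cellKey_le_cellKey] at h h'
    apply cellTrans_apply_of_ne <;> simp only [letter_mk, ne_eq] <;> pnat_to_nat <;> omega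

lemma after_row_apply_of_mem {r j y : ℕ+} (hc : (r + 1, j) ∈ D)
    (hy : after D (r + 1, j) y = r + 1 + j) : after D (r, 1) y = r + j := by
  have hnext : after D (r + 1, j + 1) y = r + j := by
    rw [after_succ hc, Perm.mul_apply, hy, ← letter_add_one (r + 1, j), cellTrans_eq_swap,
      swap_apply_right, letter_mk]
    pnat_to_nat
    omega
  refine after_apply_of_forall (cellKey_le_cellKey.mpr (Or.inl (PNat.lt_add_right r 1))) ?_ hnext
  rintro ⟨r', m⟩ - h h'
  simp only [cellKey_lt_cellKey, cellKey_le_cellKey] at h h'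
  apply cellTrans_apply_of_ne <;> simp only [letter_mk, ne_eq] <;> pnat_to_nat <;> omega

lemma after_row_apply_of_forall_mem {r s j y : ℕ+} (hrs : r ≤ s)
    (hcol : ∀ r', r < r' → r' ≤ s → (r', j) ∈ D) (hy : after D (s, 1) y = s + j) :
    after D (r, 1) y = r + j := by
  obtain ⟨d, hd⟩ : ∃ d : ℕ, (s : ℕ) = r + d := ⟨s - r, by pnat_to_nat; omega⟩
  induction d generalizing r with
  | zero =>
    rw [PNat.coe_inj.mp hd] at hy
    exact hy
  | succ d ih =>
    have hr : r < r + 1 := PNat.lt_add_right r 1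
    have hrow : after D (r + 1, 1) y = r + 1 + j :=
      ih (by pnat_to_nat; omega) (fun r' h h' => hcol r' (hr.trans h) h') (by pnat_to_nat; omega)
    have hkey : cellKey (r + 1, j) ≤ cellKey (r + 1, 1) :=
      cellKey_le_cellKey.mpr (Or.inr ⟨rfl, one_le⟩)
    refine after_row_apply_of_mem (hcol _ hr (by pnat_to_nat; omega)) ?_
    refine after_apply_of_forall hkey ?_ hrow
    rintro ⟨r', m⟩ - h h'
    simp only [cellKey_lt_cellKey, cellKey_le_cellKey] at h h'
    apply cellTrans_apply_of_ne <;> simp only [letter_mk, ne_eq] <;> pnat_to_nat <;> omega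

lemma after_apply_ne_of_not_mem {r j y : ℕ+} (hj : (r, j) ∉ D)
    (hj' : (r, j + 1) ∉ D) (hy : after D (r, 1) y = r + j) {c : ℕ+ × ℕ+} (hc : c ∈ D)
    (hrow : c.1 = r) : after D c y ≠ letter c + 1 := by
  obtain ⟨r, m⟩ := c
  dsimp only at hrow
  subst hrow
  have hkey : cellKey (r, m) ≤ cellKey (r, 1) := cellKey_le_cellKey.mpr (Or.inr ⟨rfl, one_le⟩)
  rw [after_apply_of_forall hkey ?_ hy]
  · intro hm
    have hmj : m = j := by
      simp only [letter_mk] at hm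
      pnat_to_nat
      omega
    exact hj (hmj ▸ hc)
  · rintro ⟨r', m'⟩ hc' h h'
    simp only [cellKey_lt_cellKey, cellKey_le_cellKey] at h h'
    have hnj : ¬(r' = r ∧ m' = j) := fun ⟨hr, hm⟩ => hj (hr ▸ hm ▸ hc')
    have hnj' : ¬(r' = r ∧ m' = j + 1) := fun ⟨hr, hm⟩ => hj' (hr ▸ hm ▸ hc')
    apply cellTrans_apply_of_ne <;> simp only [letter_mk, ne_eq] <;> pnat_to_nat <;> omega

lemma card_lt_of_forall_crossing_above {s : Finset ℕ+} {r y : ℕ+}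
    (hs : ∀ t ∈ s,
      ∃ c ∈ D, c.1 < r ∧ after D c t = letter c ∧ after D c y = letter c + 1) :
    s.card < r := by
  choose! f hfD hfr hft hfy using hs
  have hinj : Set.InjOn (fun t => (f t).1) s := by
    intro t ht t' ht' hrow
    by_contra hne
    have hcol : (f t).2 ≠ (f t').2 := fun h => hne <| by
      have hf : f t = f t' := Prod.ext hrow h
      exact (after D (f t)).injective ((hft t ht).trans (hf ▸ (hft t' ht').symm))
    rcases hcol.lt_or_gt with hlt | hlt
    · exact after_apply_ne_of_lt_snd (hfD t ht) hrow.symm hlt (hfy t ht) (hfy t' ht')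
    · exact after_apply_ne_of_lt_snd (hfD t' ht') hrow hlt (hfy t' ht') (hfy t ht)
  calc s.card ≤ (Ico 1 r).card :=
        card_le_card_of_injOn _ (fun t ht => mem_Ico.mpr ⟨one_le, hfr t ht⟩) hinj
    _ < r := by rw [PNat.card_Ico]; exact Nat.sub_lt r.pos one_pos

lemma IsPipeDream.exists_le_of_after_row (hD : IsPipeDream w D) {r j y : ℕ+} (hj : (r, j) ∉ D)
    (hj' : (r, j + 1) ∉ D) (hy : after D (r, 1) y = r + j) (hry : r < y) :
    ∃ a ≤ r, w a < w y := by
  by_contra! hall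
  have hcross : ∀ t ∈ Icc 1 r,
      ∃ c ∈ D, c.1 < r ∧ after D c t = letter c ∧ after D c y = letter c + 1 := by
    intro t ht
    have htr : t ≤ r := (mem_Icc.mp ht).2
    have hty : t < y := htr.trans_lt hry
    have hwty : w y < w t := (hall t htr).lt_of_ne fun h => hty.ne (w.injective h).symm
    obtain ⟨c, hc, ht, hy'⟩ := hD.exists_mem_of_mem_inversions ⟨hty, hwty⟩
    refine ⟨c, hc, lt_of_le_of_ne (le_of_not_gt fun hrc => ?_) fun hrow =>
      after_apply_ne_of_not_mem hj hj' hy hc hrow hy', ht, hy'⟩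
    rw [after_apply_of_lt (htr.trans_lt hrc)] at ht
    obtain ⟨r', m⟩ := c
    simp only [letter_mk] at ht hrc
    pnat_to_nat
    omega
  have := card_lt_of_forall_crossing_above hcross
  simp at this

theorem IsPipeDream.not_avoids1432_of_ladder (hD : IsPipeDream w D)
    {i₀ b j : ℕ+} (hb : i₀ < b) (hbot : (b + 1, j) ∈ D) (hbot' : (b + 1, j + 1) ∉ D)
    (htop : (i₀, j) ∉ D) (htop' : (i₀, j + 1) ∉ D)
    (hcol : ∀ r, i₀ < r → r ≤ b → (r, j) ∈ D) (hcorner : (b, j + 1) ∈ D) :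
    ¬ Avoids1432 w := by
  set X := (after D (b + 1, j))⁻¹ (letter (b + 1, j))
  set Y := (after D (b + 1, j))⁻¹ (letter (b + 1, j) + 1)
  have hX : after D (b + 1, j) X = letter (b + 1, j) := apply_symm_apply _ _
  have hY : after D (b + 1, j) Y = letter (b + 1, j) + 1 := apply_symm_apply _ _
  obtain ⟨hXY, hwXY⟩ := hD.mem_inversions hbot hX hY
  have hYb : after D (b, 1) Y = b + j := after_row_apply_of_mem hbot (hY.trans (letter_add_one _))
  have hYi₀ : after D (i₀, 1) Y = i₀ + j := after_row_apply_of_forall_mem hb.le hcol hYb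
  have hXb : after D (b, j + 1) X = letter (b, j + 1) + 1 := by
    have hX' : after D (b + 1, j + 1) X = letter (b, j + 1) + 1 := by
      rw [after_succ hbot, Perm.mul_apply, hX, cellTrans_eq_swap, swap_apply_left,
        letter_mk, letter_mk]
      pnat_to_nat
      omega
    refine after_apply_of_forall (cellKey_le_cellKey.mpr (Or.inl (PNat.lt_add_right b 1))) ?_ hX'
    rintro ⟨r, m⟩ hc h h'
    simp only [cellKey_lt_cellKey, cellKey_le_cellKey] at h h'
    have hgap : ¬(r = b + 1 ∧ m = j + 1) := fun ⟨hr, hm⟩ => hbot' (hr ▸ hm ▸ hc)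
    apply cellTrans_apply_of_ne <;> simp only [letter_mk, ne_eq] <;> pnat_to_nat <;> omega
  set Z := (after D (b, j + 1))⁻¹ (letter (b, j + 1))
  have hZ : after D (b, j + 1) Z = letter (b, j + 1) := apply_symm_apply _ _
  obtain ⟨hZX, hwZX⟩ := hD.mem_inversions hcorner hZ hXb
  have hbZ : b ≤ Z := le_of_not_gt fun hZb => by
    rw [after_apply_of_lt (t := (b, j + 1)) hZb, letter_mk] at hZ
    rw [hZ] at hZb
    pnat_to_nat
    omega
  have hi₀Z : i₀ < Z := hb.trans_le hbZ
  obtain ⟨a, ha, hwa⟩ :=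
    hD.exists_le_of_after_row htop htop' hYi₀ (hi₀Z.trans (hZX.trans hXY))
  exact fun hav => hav ⟨a, Z, X, Y, ha.trans_lt hi₀Z, hZX, hXY, hwa, hwXY, hwZX⟩

end PipeDreams

theorem no_nonsimple_ladder_move_of_avoids_1432_general (w : Equiv.Perm ℕ+)
    (hav : Avoids1432 w)
    (D : Finset (ℕ+ × ℕ+)) (hD : IsPipeDream w D) (k : ℕ) (hk : 1 ≤ k) :
    ¬ ∃ D' : Finset (ℕ+ × ℕ+), LadderMove k D D' := by
  rintro ⟨-, i₀, j, hbot, hbot', htop, htop', hladder, -⟩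
  set b : ℕ+ := i₀ + k.toPNat'
  have hb : i₀ < b := PNat.lt_add_right i₀ _
  have hsucc : i₀ + k.succPNat = b + 1 := by
    apply PNat.eq
    simp only [b, PNat.add_coe, Nat.succPNat_coe, PNat.toPNat'_coe hk, PNat.one_coe]
    omega
  rw [hsucc] at hbot hbot' hladder
  have hbb : b < b + 1 := PNat.lt_add_right b 1
  refine hD.not_avoids1432_of_ladder hb hbot hbot' htop htop'
    (fun r h h' => (hladder r h (h'.trans_lt hbb)).1) (hladder b hb hbb).2 hav

/-- if `w` avoids 1432 then no ladder move of positive order is applicable to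
any pipe dream of `w`. -/
theorem no_nonsimple_ladder_move_of_avoids_1432 (w : Equiv.Perm ℕ+)
    (hw : {x : ℕ+ | w x ≠ x}.Finite) (hav : Avoids1432 w)
    (D : Finset (ℕ+ × ℕ+)) (hD : IsPipeDream w D) (k : ℕ) (hk : 1 ≤ k) :
    ¬ ∃ D' : Finset (ℕ+ × ℕ+), LadderMove k D D' :=
  no_nonsimple_ladder_move_of_avoids_1432_general w hav D hD k hk
end

section
/- Let r be a binary relation on a set V that is terminating (there is no infinite sequence v_0, v_1, v_2, … with r(v_t, v_{t+1}) for all t) and satisfies the diamond condition: whenever r(v, v_1) and r(v, v_2) with v_1 ≠ v_2, there exists v' with r(v_1, v') and r(v_2, v'). Let s ∈ V be such that every element of V is reachable from s by a finite r-path. Then (a) for every v ∈ V, any two r-paths from s to v have the same length, and (b) V contains exactly one sink, i.e., exactly one element u such that there is no u' with r(u, u'). -/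
namespace DiamondLemmaAux

variable {V : Type*}

inductive DLPath (r : V → V → Prop) : V → V → ℕ → Prop
  | zero (x : V) : DLPath r x x 0
  | cons {x y z : V} {n : ℕ} : r x y → DLPath r y z n → DLPath r x z (n + 1)

lemma DLPath_trans {r : V → V → Prop} :
    ∀ {x y z : V} {n m : ℕ}, DLPath r x y n → DLPath r y z m → DLPath r x z (n + m) := by
  intro x y z n m p
  induction p with
  | zero => intro q; simpa using q
  | cons h _ ih =>
    intro q
    have h2 := ih q
    have e : ∀ a b : ℕ, a + 1 + b = (a + b) + 1 := by omega
    rw [e]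
    exact DLPath.cons h h2

lemma ofFun {r : V → V → Prop} :
    ∀ (n : ℕ) (f : ℕ → V), (∀ t < n, r (f t) (f (t + 1))) → DLPath r (f 0) (f n) n := by
  intro n
  induction n with
  | zero => intro f _; exact .zero _
  | succ k ih =>
    intro f hf
    exact .cons (hf 0 (Nat.succ_pos k))
      (ih (fun t => f (t + 1)) (fun t ht => hf (t + 1) (by omega)))

lemma exists_max {r : V → V → Prop} (hacc : ∀ x : V, Acc (fun a b => r b a) x) (x : V) :
    ∃ (n : ℕ) (u : V), DLPath r x u n ∧ ¬ ∃ w, r u w := by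
  induction hacc x with
  | intro x _ ih =>
    by_cases h : ∃ y, r x y
    · obtain ⟨y, hy⟩ := h
      obtain ⟨n, u, p, hu⟩ := ih y hy
      exact ⟨n + 1, u, .cons hy p, hu⟩
    · exact ⟨0, x, .zero x, h⟩

lemma core {r : V → V → Prop}
    (hd : ∀ v v₁ v₂ : V, r v v₁ → r v v₂ → v₁ ≠ v₂ → ∃ v', r v₁ v' ∧ r v₂ v')
    (hacc : ∀ x : V, Acc (fun a b => r b a) x) :
    ∀ (x : V) (n m : ℕ) (u₁ u₂ : V), DLPath r x u₁ n → (¬ ∃ w, r u₁ w) →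
      DLPath r x u₂ m → (¬ ∃ w, r u₂ w) → n = m ∧ u₁ = u₂ := by
  intro x
  induction hacc x with
  | intro x _ ih =>
    intro n m u₁ u₂ p₁ h₁ p₂ h₂
    cases p₁ with
    | zero =>
      cases p₂ with
      | zero => exact ⟨rfl, rfl⟩
      | cons hxy _ => exact absurd ⟨_, hxy⟩ h₁
    | @cons _ a _ n' hxa pa =>
      cases p₂ with
      | zero => exact absurd ⟨_, hxa⟩ h₂
      | @cons _ b _ m' hxb pb =>
        by_cases hab : a = b
        · subst hab
          obtain ⟨e1, e2⟩ := ih a hxa n' m' u₁ u₂ pa h₁ pb h₂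
          exact ⟨by omega, e2⟩
        · obtain ⟨c, hac, hbc⟩ := hd x a b hxa hxb hab
          obtain ⟨k, w, pc, hw⟩ := exists_max hacc c
          have pa' : DLPath r a w (k + 1) := .cons hac pc
          have pb' : DLPath r b w (k + 1) := .cons hbc pc
          obtain ⟨e1, e2⟩ := ih a hxa n' (k + 1) u₁ w pa h₁ pa' hw
          obtain ⟨e3, e4⟩ := ih b hxb m' (k + 1) u₂ w pb h₂ pb' hw
          exact ⟨by omega, by rw [e2, e4]⟩

end DiamondLemmaAux

open DiamondLemmaAux in
/-- Diamond lemma: if `r` is terminating, satisfies the diamond condition,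
and every element is reachable from `s` by a finite `r`-path, then any two `r`-paths from
`s` to a given vertex have the same length, and there is exactly one sink. -/
theorem diamond_lemma {V : Type*} (r : V → V → Prop)
    (hterm : ¬ ∃ f : ℕ → V, ∀ t : ℕ, r (f t) (f (t + 1)))
    (hdiamond : ∀ v v₁ v₂ : V, r v v₁ → r v v₂ → v₁ ≠ v₂ → ∃ v', r v₁ v' ∧ r v₂ v')
    (s : V)
    (hreach : ∀ v : V, ∃ (n : ℕ) (f : ℕ → V),
      f 0 = s ∧ f n = v ∧ ∀ t < n, r (f t) (f (t + 1))) :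
    (∀ (v : V) (n m : ℕ) (f g : ℕ → V),
        f 0 = s → f n = v → (∀ t < n, r (f t) (f (t + 1))) →
        g 0 = s → g m = v → (∀ t < m, r (g t) (g (t + 1))) → n = m) ∧
    (∃! u : V, ¬ ∃ u' : V, r u u') := by
  classical
  have hacc : ∀ x : V, Acc (fun a b => r b a) x := by
    by_contra h
    push_neg at h
    obtain ⟨x, hx⟩ := h
    have key : ∀ y : V, ¬ Acc (fun a b => r b a) y →
        ∃ z, r y z ∧ ¬ Acc (fun a b => r b a) z := by
      intro y hy
      by_contra hc
      push_neg at hc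
      exact hy (Acc.intro y (fun z hz => hc z hz))
    let g : ℕ → {v : V // ¬ Acc (fun a b => r b a) v} := fun n =>
      Nat.rec ⟨x, hx⟩ (fun _ p => ⟨(key p.1 p.2).choose, (key p.1 p.2).choose_spec.2⟩) n
    exact hterm ⟨fun n => (g n).1, fun t => (key (g t).1 (g t).2).choose_spec.1⟩
  constructor
  · intro v n m f g hf0 hfn hfr hg0 hgm hgr
    have p1 := ofFun n f hfr
    rw [hf0, hfn] at p1
    have p2 := ofFun m g hgr
    rw [hg0, hgm] at p2
    obtain ⟨k, u, pv, hu⟩ := exists_max hacc v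
    have P1 : DLPath r s u (n + k) := DLPath_trans p1 pv
    have P2 : DLPath r s u (m + k) := DLPath_trans p2 pv
    have := (core hdiamond hacc s (n + k) (m + k) u u P1 hu P2 hu).1
    omega
  · obtain ⟨L, U, pU, hU⟩ := exists_max hacc s
    refine ⟨U, hU, ?_⟩
    intro u hu
    obtain ⟨n, f, hf0, hfn, hfr⟩ := hreach u
    have p := ofFun n f hfr
    rw [hf0, hfn] at p
    exact (core hdiamond hacc s n L u U p hu pU hU).2
end

section
/- Let ν(w) denote the number of pipe dreams of a permutation w, and for u ∈ S_m let p_u(w) denote the number of occurrences of the pattern u in w. Suppose c assigns an integer c(u) to every permutation u of {1,…,m} for every m ≥ 1, and satisfies, for every n ≥ 1 and every permutation w of {1,…,n}: c(w) = ν(w) − 1 − Σ_{m=1}^{n−1} Σ_{u ∈ S_m} c(u)·p_u(w). Then for every n ≥ 1 and every w ∈ S_n with w(n) = n, c(w) = 0. -/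
/-- The identification of `{1, …, n}` (as `Fin n`, with `i : Fin n` standing for the
positive integer `i + 1`) with the positive integers `≤ n`. -/
def finPNatEquiv (n : ℕ) : Fin n ≃ {x : ℕ+ // (x : ℕ) ≤ n} where
  toFun i := ⟨⟨(i : ℕ) + 1, Nat.succ_pos _⟩, by
    show (i : ℕ) + 1 ≤ n
    omega⟩
  invFun x := ⟨(x.1 : ℕ) - 1, by
    rcases x with ⟨⟨v, hv⟩, h⟩
    show v - 1 < n
    simp only [PNat.mk_coe] at h
    omega⟩
  left_inv i := by ext; simp
  right_inv x := by
    rcases x with ⟨⟨v, hv⟩, h⟩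
    refine Subtype.ext (PNat.coe_injective ?_)
    show (v - 1) + 1 = v
    omega

/-- Extend a permutation of `{1, …, n}` to a permutation of the positive integers
fixing every integer greater than `n`. -/
def extendPerm {n : ℕ} (w : Equiv.Perm (Fin n)) : Equiv.Perm ℕ+ :=
  w.extendDomain (finPNatEquiv n)

/-- The number of occurrences of the pattern `u ∈ S_m` in `w ∈ S_n`. -/
noncomputable def pOcc {m n : ℕ} (u : Equiv.Perm (Fin m)) (w : Equiv.Perm (Fin n)) : ℕ :=
  Set.ncard {a : Fin m → Fin n | StrictMono a ∧
    ∀ i j : Fin m, i < j → (w (a i) < w (a j) ↔ u i < u j)}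

/-!
Put `S(w) = Σ_{m=1}^{n} Σ_{u ∈ S_m} c(u) p_u(w)` for `w ∈ S_n`. Since `p_u(w) = [u = w]` for
`u ∈ S_n`, the hypothesis says exactly `S(w) = ν(w) - 1`, and this also holds for `n = 0`.
Let `w ∈ S_{n+1}` fix `n+1`, with restriction `w' ∈ S_n`; then `ν(w) = ν(w')`. By strong
induction, patterns `u ∈ S_m`, `m ≤ n`, fixing their last point have `c(u) = 0`; any other
pattern cannot occur through the position `n+1`, which carries the largest value, so
`p_u(w) = p_u(w')`. Hence `S(w) = S(w') + c(w)`, and so `c(w) = 0`.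
-/

open Equiv

lemma invNum_one : invNum 1 = 0 := by
  rw [invNum]
  convert Set.ncard_empty (ℕ+ × ℕ+) using 2
  ext p
  simpa using le_of_lt

lemma nu_one : nu 1 = 1 := by
  have hD : {D : Finset (ℕ+ × ℕ+) | IsPipeDream 1 D} = {∅} := by
    ext D
    simp only [Set.mem_ofPred_eq, Set.mem_singleton_iff, IsPipeDream, invNum_one,
      Finset.card_eq_zero, and_iff_left_iff_imp]
    rintro rfl
    simp [pdWord]
  rw [nu, hD, Set.ncard_singleton]

lemma Equiv.Perm.exists_castSucc_restrict_of_apply_last {n : ℕ} {w : Perm (Fin (n + 1))}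
    (hw : w (Fin.last n) = Fin.last n) :
    ∃ w' : Perm (Fin n), ∀ i, w i.castSucc = (w' i).castSucc := by
  set σ : Perm (Option (Fin n)) := finSuccEquivLast.permCongr w
  have hσ : σ none = none := by simp [σ, permCongr_apply, hw]
  refine ⟨removeNone σ, fun i => finSuccEquivLast.injective ?_⟩
  rw [finSuccEquivLast_castSucc, removeNone_some]
  · simp [σ, permCongr_apply]
  · exact Option.ne_none_iff_exists'.1 (hσ ▸ σ.injective.ne (Option.some_ne_none i))

lemma extendPerm_apply_succPNat {n : ℕ} (w : Perm (Fin n)) (i : Fin n) :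
    extendPerm w (i : ℕ).succPNat = (w i : ℕ).succPNat :=
  Perm.extendDomain_apply_image w (finPNatEquiv n) i

lemma extendPerm_apply_of_lt {n : ℕ} (w : Perm (Fin n)) {x : ℕ+} (hx : n < x) :
    extendPerm w x = x :=
  Perm.extendDomain_apply_not_subtype w (finPNatEquiv n) (not_le.2 hx)

lemma extendPerm_of_castSucc {n : ℕ} {w : Perm (Fin (n + 1))} {w' : Perm (Fin n)}
    (hw : w (Fin.last n) = Fin.last n) (h : ∀ i, w i.castSucc = (w' i).castSucc) :
    extendPerm w' = extendPerm w := by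
  ext x
  obtain ⟨k, rfl⟩ : ∃ k : ℕ, k.succPNat = x := ⟨x.natPred, x.succPNat_natPred⟩
  rcases lt_trichotomy k n with hk | rfl | hk
  · rw [extendPerm_apply_succPNat w' ⟨k, hk⟩]
    have := extendPerm_apply_succPNat w (Fin.castSucc ⟨k, hk⟩)
    rw [h] at this
    simpa using this.symm
  · rw [extendPerm_apply_of_lt w' (by simp)]
    simpa [hw] using (extendPerm_apply_succPNat w (Fin.last k)).symm
  · rw [extendPerm_apply_of_lt _ (by simpa using hk.trans (Nat.lt_succ_self k)),
      extendPerm_apply_of_lt _ (by simpa using hk)]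

lemma Equiv.Perm.eq_of_forall_lt_imp_lt_iff {α : Type*} [LinearOrder α] [Finite α]
    {u w : Perm α} (h : ∀ i j, i < j → (w i < w j ↔ u i < u j)) : u = w := by
  have hmono : StrictMono (u ∘ w.symm) := by
    intro x y hxy
    rcases lt_trichotomy (w.symm x) (w.symm y) with hlt | heq | hgt
    · exact (h _ _ hlt).1 (by simpa using hxy)
    · exact absurd (w.symm.injective heq) hxy.ne
    · have hyx : ¬ u (w.symm y) < u (w.symm x) := by
        rw [← h _ _ hgt]
        simpa using hxy.le
      exact lt_of_le_of_ne (not_lt.1 hyx) (u.injective.ne (w.symm.injective.ne hxy.ne))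
  ext i
  simpa using congrFun hmono.eq_id (w i)

section Occurrences

variable {m n : ℕ}

def IsOccurrence (u : Perm (Fin m)) (w : Perm (Fin n)) (a : Fin m → Fin n) : Prop :=
  StrictMono a ∧ ∀ i j, i < j → (w (a i) < w (a j) ↔ u i < u j)

lemma pOcc_eq_ncard (u : Perm (Fin m)) (w : Perm (Fin n)) :
    pOcc u w = {a | IsOccurrence u w a}.ncard :=
  rfl

lemma isOccurrence_iff_of_same_size {u w : Perm (Fin n)} {a : Fin n → Fin n} :
    IsOccurrence u w a ↔ a = id ∧ u = w := by
  constructor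
  · rintro ⟨ha, hpat⟩
    obtain rfl := ha.eq_id
    exact ⟨rfl, Perm.eq_of_forall_lt_imp_lt_iff hpat⟩
  · rintro ⟨rfl, rfl⟩
    exact ⟨strictMono_id, fun _ _ _ => Iff.rfl⟩

lemma pOcc_of_same_size (u w : Perm (Fin n)) : pOcc u w = if u = w then 1 else 0 := by
  rw [pOcc_eq_ncard]
  simp_rw [isOccurrence_iff_of_same_size]
  split_ifs with huw <;> simp [huw]

lemma IsOccurrence.apply_ne_last {u : Perm (Fin (m + 1))} {w : Perm (Fin (n + 1))}
    {a : Fin (m + 1) → Fin (n + 1)} (ha : IsOccurrence u w a)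
    (hw : w (Fin.last n) = Fin.last n) (hu : u (Fin.last m) ≠ Fin.last m) (i : Fin (m + 1)) :
    a i ≠ Fin.last n := by
  intro hai
  have hi : i = Fin.last m := by
    by_contra hi
    exact (ha.1 (Fin.lt_last_iff_ne_last.2 hi)).not_ge (hai ▸ Fin.le_last _)
  subst hi
  have hmax : ∀ j < Fin.last m, u j < u (Fin.last m) := by
    intro j hj
    rw [← ha.2 j _ hj, hai, hw, Fin.lt_last_iff_ne_last, ← hw, w.injective.ne_iff, ← hai]
    exact ha.1.injective.ne hj.ne
  have hsymm : u.symm (Fin.last m) = Fin.last m := by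
    by_contra hne
    exact not_lt.2 (Fin.le_last _) (by simpa using hmax _ (Fin.lt_last_iff_ne_last.2 hne))
  exact hu (by simpa using (congrArg u hsymm).symm)

lemma isOccurrence_castSucc_comp_iff {u : Perm (Fin m)} {w : Perm (Fin (n + 1))}
    {w' : Perm (Fin n)} (h : ∀ i, w i.castSucc = (w' i).castSucc) {a : Fin m → Fin n} :
    IsOccurrence u w (Fin.castSucc ∘ a) ↔ IsOccurrence u w' a := by
  simp [IsOccurrence, h, StrictMono, Fin.castSucc_lt_castSucc_iff]

lemma pOcc_eq_of_castSucc {u : Perm (Fin (m + 1))} {w : Perm (Fin (n + 1))}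
    {w' : Perm (Fin n)} (hw : w (Fin.last n) = Fin.last n)
    (h : ∀ i, w i.castSucc = (w' i).castSucc) (hu : u (Fin.last m) ≠ Fin.last m) :
    pOcc u w = pOcc u w' := by
  have himage : {a | IsOccurrence u w a} = (Fin.castSucc ∘ ·) '' {a | IsOccurrence u w' a} := by
    ext a
    constructor
    · intro ha
      choose a' ha' using fun i => Fin.exists_castSucc_eq.2 (ha.apply_ne_last hw hu i)
      obtain rfl : a = Fin.castSucc ∘ a' := funext fun i => (ha' i).symm
      exact ⟨a', (isOccurrence_castSucc_comp_iff h).1 ha, rfl⟩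
    · rintro ⟨a', ha', rfl⟩
      exact (isOccurrence_castSucc_comp_iff h).2 ha'
  rw [pOcc_eq_ncard, pOcc_eq_ncard, himage,
    Set.ncard_image_of_injective _ (Fin.castSucc_injective n).comp_left]

end Occurrences

noncomputable def patternSum (c : (m : ℕ) → Perm (Fin m) → ℤ) {n : ℕ} (w : Perm (Fin n)) : ℤ :=
  ∑ m ∈ Finset.Icc 1 n, ∑ u : Perm (Fin m), c m u * (pOcc u w : ℤ)

section PatternSum

variable (c : (m : ℕ) → Perm (Fin m) → ℤ)

lemma patternSum_succ {n : ℕ} (w : Perm (Fin (n + 1))) :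
    patternSum c w = ∑ m ∈ Finset.Icc 1 n, ∑ u : Perm (Fin m), c m u * (pOcc u w : ℤ) +
      c (n + 1) w := by
  rw [patternSum, Finset.sum_Icc_succ_top (by omega)]
  simp [pOcc_of_same_size]

lemma patternSum_eq_nu_sub_one
    (hc : ∀ (n : ℕ), 1 ≤ n → ∀ w : Perm (Fin n),
      c n w = (nu (extendPerm w) : ℤ) - 1 -
        ∑ m ∈ Finset.Icc 1 (n - 1), ∑ u : Perm (Fin m), c m u * (pOcc u w : ℤ))
    {n : ℕ} (w : Perm (Fin n)) :
    patternSum c w = nu (extendPerm w) - 1 := by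
  cases n with
  | zero =>
    rw [Subsingleton.elim w 1, extendPerm, Perm.extendDomain_one, nu_one]
    simp [patternSum]
  | succ n =>
    rw [patternSum_succ, hc (n + 1) (by omega) w, Nat.add_sub_cancel]
    ring

lemma patternSum_eq_of_castSucc {n : ℕ}
    (hc : ∀ k < n, ∀ u : Perm (Fin (k + 1)), u (Fin.last k) = Fin.last k → c (k + 1) u = 0)
    {w : Perm (Fin (n + 1))} {w' : Perm (Fin n)} (hw : w (Fin.last n) = Fin.last n)
    (h : ∀ i, w i.castSucc = (w' i).castSucc) :
    patternSum c w = patternSum c w' + c (n + 1) w := by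
  rw [patternSum_succ, patternSum]
  congr 1
  refine Finset.sum_congr rfl fun m hm => Finset.sum_congr rfl fun u _ => ?_
  obtain ⟨k, rfl⟩ : ∃ k, m = k + 1 := ⟨m - 1, by grind⟩
  by_cases hu : u (Fin.last k) = Fin.last k
  · simp [hc k (by grind) u hu]
  · rw [pOcc_eq_of_castSucc hw h hu]

end PatternSum

/-- if `c(w) = ν(w) - 1 - Σ_{m=1}^{n-1} Σ_{u ∈ S_m} c(u) p_u(w)` for all
`w ∈ S_n`, `n ≥ 1`, then `c(w) = 0` whenever `w(n) = n`. -/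
theorem c_eq_zero_of_fixes_last (c : (m : ℕ) → Equiv.Perm (Fin m) → ℤ)
    (hc : ∀ (n : ℕ), 1 ≤ n → ∀ w : Equiv.Perm (Fin n),
      c n w = (nu (extendPerm w) : ℤ) - 1 -
        ∑ m ∈ Finset.Icc 1 (n - 1), ∑ u : Equiv.Perm (Fin m), c m u * (pOcc u w : ℤ)) :
    ∀ (m : ℕ) (w : Equiv.Perm (Fin (m + 1))), w (Fin.last m) = Fin.last m →
      c (m + 1) w = 0 := by
  intro m
  induction m using Nat.strong_induction_on with
  | _ n ih =>
  intro w hw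
  obtain ⟨w', h⟩ := Perm.exists_castSucc_restrict_of_apply_last hw
  have hsplit := patternSum_eq_of_castSucc c ih hw h
  rw [patternSum_eq_nu_sub_one c hc, patternSum_eq_nu_sub_one c hc,
    extendPerm_of_castSucc hw h] at hsplit
  linarith
end
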